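/- arXiv:1904.08682 — 2 statements merged into one kernel-verified Lean document; each statement's English description precedes it below -/
import Mathlib

section
/- Let T_l be any l×l matrix over GF(2) and let T_L = T₂⊗T_l = [[T_l,0],[T_l,T_l]]. Then for every 0 ≤ i ≤ l−1 and every 0 ≤ w ≤ 2l, the number of weight-w erasure patterns killing bit channel l+i of T_L satisfies E_{l+i,w}(T_L) = Σ_{w₀=0}^{⌊w/2⌋} C(l−w₀, w−2w₀) · 2^{w−2w₀} · E_{i,w₀}(T_l), where C(a,b) denotes the binomial coefficient (with C(a,b) = 0 whenever b > a). -/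
open Matrix

/-- Kronecker product of square matrices over GF(2), with row/column index
pairs ordered lexicographically: `(a, b)` corresponds to index `a * n + b`. -/
noncomputable def kron {m n : ℕ} (A : Matrix (Fin m) (Fin m) (ZMod 2))
    (B : Matrix (Fin n) (Fin n) (ZMod 2)) :
    Matrix (Fin (m * n)) (Fin (m * n)) (ZMod 2) :=
  Matrix.reindex finProdFinEquiv finProdFinEquiv (Matrix.kroneckerMap (· * ·) A B)

/-- The matrix `T₂ = [[1,0],[1,1]]` over GF(2). -/
def Ttwo : Matrix (Fin 2) (Fin 2) (ZMod 2) := !![1, 0; 1, 1]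

/-- An erasure pattern `e : Fin l → Bool` (where `e j = true` means the `j`-th
copy of the channel is erased) kills bit channel `i` of the kernel `T` if the
vector `Y_{l-i} = (1,0,…,0)ᵀ` of length `l - i` (indexed by rows `r` with
`i ≤ r`) is not in the `𝔽₂`-linear span of the columns of the submatrix
`T[i : l-1]` at the non-erased positions. -/
def Kills {l : ℕ} (T : Matrix (Fin l) (Fin l) (ZMod 2)) (i : Fin l)
    (e : Fin l → Bool) : Prop :=
  (fun r : {r : Fin l // i ≤ r} => if r.val = i then (1 : ZMod 2) else 0) ∉
    Submodule.span (ZMod 2)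
      {w : {r : Fin l // i ≤ r} → ZMod 2 | ∃ j : Fin l, e j = false ∧ w = fun r => T r.val j}

/-- `E_{i,w}(T)`: the number of erasure patterns of weight `w` (i.e. with
exactly `w` erased positions) that kill bit channel `i` of `T`. -/
noncomputable def numKilling {l : ℕ} (T : Matrix (Fin l) (Fin l) (ZMod 2))
    (i : Fin l) (w : ℕ) : ℕ :=
  Nat.card {e : Fin l → Bool //
    (Finset.univ.filter fun j => e j = true).card = w ∧ Kills T i e}

/-- The erasure polynomial `p_i^T(z) = Σ_w E_{i,w}(T) z^w (1-z)^{l-w} ∈ ℤ[z]`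
of bit channel `i` of `T`. -/
noncomputable def erasurePoly {l : ℕ} (T : Matrix (Fin l) (Fin l) (ZMod 2))
    (i : Fin l) : Polynomial ℤ :=
  ∑ w ∈ Finset.range (l + 1),
    (numKilling T i w : Polynomial ℤ) * Polynomial.X ^ w * (1 - Polynomial.X) ^ (l - w)

/-!
Rows `l + r` of `T₂ ⊗ T` are `[T_r | T_r]`, because the bottom row of `T₂` is `(1, 1)`. Hence for
bit channel `l + i` the columns `j` and `l + j`, restricted to the rows `≥ l + i`, are both column
`j` of `T[i:]`, and a pattern `e` kills `l + i` exactly when the pattern `g_j = e_j ∧ e_{l+j}` kills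
`i` in `T`. Pairing the positions `j` and `l + j`, a pair contributes `X²` to the weight enumerator
when `g_j = 1` and `1 + 2X` otherwise, so the patterns above a fixed `g` of weight `w₀` have
enumerator `X^{2 w₀} (1 + 2X)^{l - w₀}`, whose coefficient of `X^w` is
`C(l - w₀, w - 2 w₀) 2^{w - 2 w₀}`.
-/

open Finset Polynomial

section Counting

variable {ι : Type*} [Fintype ι]

def weight (e : ι → Bool) : ℕ := #{j | e j = true}

def pairWeight (p : ι → Bool × Bool) : ℕ := ∑ j, ((p j).1.toNat + (p j).2.toNat)

def andPattern (p : ι → Bool × Bool) (j : ι) : Bool := (p j).1 && (p j).2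

lemma weight_eq_sum_toNat (e : ι → Bool) : weight e = ∑ j, (e j).toNat := by
  rw [weight, card_filter]
  exact sum_congr rfl fun j _ => by cases e j <;> rfl

lemma sum_X_pow_toNat_add_toNat_of_and_eq (b : Bool) :
    ∑ q : Bool × Bool with (q.1 && q.2) = b, (X : ℕ[X]) ^ (q.1.toNat + q.2.toNat) =
      if b then X ^ 2 else 1 + 2 * X := by
  cases b <;> simp [sum_filter, Fintype.sum_prod_type, two_mul, add_comm, add_left_comm]

lemma coeff_one_add_two_mul_X_pow (m k : ℕ) :
    ((1 + 2 * X : ℕ[X]) ^ m).coeff k = m.choose k * 2 ^ k := by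
  have hterm (j : ℕ) :
      (2 * X) ^ j * 1 ^ (m - j) * (m.choose j : ℕ[X]) = ((m.choose j * 2 ^ j : ℕ) : ℕ[X]) * X ^ j := by
    push_cast
    ring
  rw [add_comm, add_pow, finsetSum_coeff]
  simp_rw [hterm, coeff_natCast_mul, coeff_X_pow, mul_ite, mul_one, mul_zero, Nat.cast_id,
    sum_ite_eq, mem_range]
  split_ifs with h
  · rfl
  · rw [Nat.choose_eq_zero_of_lt (by omega), zero_mul]

lemma coeff_X_pow_mul_one_add_two_mul_X_pow (a m w : ℕ) :
    ((X : ℕ[X]) ^ (2 * a) * (1 + 2 * X) ^ m).coeff w =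
      if 2 * a ≤ w then m.choose (w - 2 * a) * 2 ^ (w - 2 * a) else 0 := by
  rw [coeff_X_pow_mul', coeff_one_add_two_mul_X_pow]

variable [DecidableEq ι]

lemma sum_X_pow_pairWeight_of_andPattern_eq (g : ι → Bool) :
    ∑ p : ι → Bool × Bool with andPattern p = g, (X : ℕ[X]) ^ pairWeight p =
      X ^ (2 * weight g) * (1 + 2 * X) ^ (Fintype.card ι - weight g) := by
  have hfiber : ({p | andPattern p = g} : Finset (ι → Bool × Bool)) =
      Fintype.piFinset fun j => {q | (q.1 && q.2) = g j} := by
    ext p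
    simp [Fintype.mem_piFinset, andPattern, funext_iff]
  rw [hfiber]
  simp_rw [pairWeight, ← prod_pow_eq_pow_sum]
  rw [← prod_univ_sum (fun j => {q : Bool × Bool | (q.1 && q.2) = g j})
    (fun _ q => (X : ℕ[X]) ^ (q.1.toNat + q.2.toNat))]
  simp_rw [sum_X_pow_toNat_add_toNat_of_and_eq, prod_ite, prod_const, ← pow_mul, mul_comm 2]
  rw [← compl_filter, card_compl, weight]

lemma card_andPattern_eq_pairWeight_eq (g : ι → Bool) (w : ℕ) :
    #{p : ι → Bool × Bool | andPattern p = g ∧ pairWeight p = w} =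
      if 2 * weight g ≤ w then
        (Fintype.card ι - weight g).choose (w - 2 * weight g) * 2 ^ (w - 2 * weight g) else 0 := by
  rw [← coeff_X_pow_mul_one_add_two_mul_X_pow, ← sum_X_pow_pairWeight_of_andPattern_eq,
    finsetSum_coeff]
  simp_rw [coeff_X_pow, sum_boole, filter_filter, eq_comm (a := w), Nat.cast_id]

theorem card_pairWeight_eq_and_andPattern (P : (ι → Bool) → Prop) [DecidablePred P] (w : ℕ) :
    #{p : ι → Bool × Bool | pairWeight p = w ∧ P (andPattern p)} =
      ∑ w₀ ∈ range (w / 2 + 1),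
        (Fintype.card ι - w₀).choose (w - 2 * w₀) * 2 ^ (w - 2 * w₀) * #{g | weight g = w₀ ∧ P g} := by
  set c : ℕ → ℕ := fun w₀ => (Fintype.card ι - w₀).choose (w - 2 * w₀) * 2 ^ (w - 2 * w₀)
  calc #{p : ι → Bool × Bool | pairWeight p = w ∧ P (andPattern p)}
      = ∑ g with P g, #{p : ι → Bool × Bool | andPattern p = g ∧ pairWeight p = w} := by
        rw [card_eq_sum_card_fiberwise (f := andPattern) (t := univ) fun _ _ => mem_univ _,
          sum_filter]
        refine sum_congr rfl fun g _ => ?_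
        split_ifs with hP
        · congr 1
          ext p
          simp only [mem_filter, mem_univ, true_and]
          exact ⟨fun h => ⟨h.2, h.1.1⟩, fun h => ⟨⟨h.2, h.1 ▸ hP⟩, h.1⟩⟩
        · rw [card_eq_zero, filter_eq_empty_iff]
          rintro p hp rfl
          exact hP (mem_filter.1 hp).2.2
    _ = ∑ g with P g ∧ 2 * weight g ≤ w, c (weight g) := by
        rw [← filter_filter, sum_filter (p := fun g => 2 * weight g ≤ w)]
        simp_rw [card_andPattern_eq_pairWeight_eq]
        rfl
    _ = ∑ w₀ ∈ range (w / 2 + 1), ∑ g ∈ {g | P g ∧ 2 * weight g ≤ w} with weight g = w₀,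
          c (weight g) := by
        refine (sum_fiberwise_of_maps_to (g := (weight : (ι → Bool) → ℕ)) (fun g hg => ?_) _).symm
        simp only [mem_filter, mem_range] at hg ⊢
        omega
    _ = _ := by
        refine sum_congr rfl fun w₀ hw₀ => ?_
        have h2 : 2 * w₀ ≤ w := by rw [mem_range] at hw₀; omega
        rw [filter_filter, sum_const_nat fun g hg => by rw [(mem_filter.1 hg).2.2], mul_comm]
        congr 2
        ext g
        simp only [mem_filter, mem_univ, true_and]
        exact ⟨fun ⟨⟨hP, _⟩, hw⟩ => ⟨hw, hP⟩, fun ⟨hw, hP⟩ => ⟨⟨hP, hw ▸ h2⟩, hw⟩⟩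

end Counting

lemma kills_iff_of_equiv_rows {m n : ℕ} {A : Matrix (Fin m) (Fin m) (ZMod 2)}
    {B : Matrix (Fin n) (Fin n) (ZMod 2)} {i : Fin m} {i' : Fin n} {e : Fin m → Bool}
    {e' : Fin n → Bool} (ρ : {r : Fin n // i' ≤ r} ≃ {r : Fin m // i ≤ r})
    (hρ : ∀ r, (ρ r).1 = i ↔ r.1 = i')
    (hcols : {v | ∃ j, e' j = false ∧ v = fun r => B r.1 j} =
      {v | ∃ j, e j = false ∧ v = fun r => A (ρ r).1 j}) :
    Kills A i e ↔ Kills B i' e' := by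
  let φ := LinearEquiv.funCongrLeft (ZMod 2) (ZMod 2) ρ
  have hY : φ (fun r => if r.1 = i then 1 else 0) = fun r => if r.1 = i' then 1 else 0 :=
    funext fun r => by simp [φ, hρ]
  have hS : φ '' {v | ∃ j, e j = false ∧ v = fun r => A r.1 j} =
      {v | ∃ j, e' j = false ∧ v = fun r => B r.1 j} := by
    rw [hcols]
    ext v
    constructor
    · rintro ⟨_, ⟨j, hj, rfl⟩, rfl⟩
      exact ⟨j, hj, rfl⟩
    · rintro ⟨j, hj, rfl⟩
      exact ⟨_, ⟨j, hj, rfl⟩, rfl⟩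
  unfold Kills
  rw [← hY, ← hS, Submodule.span_image_linearEquiv, Submodule.mem_map_equiv,
    LinearEquiv.symm_apply_apply]

section LowerHalf

lemma kron_finProdFinEquiv_apply {m n : ℕ} (A : Matrix (Fin m) (Fin m) (ZMod 2))
    (B : Matrix (Fin n) (Fin n) (ZMod 2)) (a b : Fin m) (r c : Fin n) :
    kron A B (finProdFinEquiv (a, r)) (finProdFinEquiv (b, c)) = A a b * B r c := by
  simp [kron]

lemma Ttwo_one_apply (a : Fin 2) : Ttwo 1 a = 1 := by
  fin_cases a <;> rfl

variable {l : ℕ}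

def lowerRows (i : Fin l) :
    {r : Fin l // i ≤ r} ≃ {R : Fin (2 * l) // finProdFinEquiv ((1 : Fin 2), i) ≤ R} where
  toFun r := ⟨finProdFinEquiv (1, (r : Fin l)), by
    have := r.2
    simp only [Fin.le_def, finProdFinEquiv_apply_val] at this ⊢
    omega⟩
  invFun R := ⟨⟨(R : Fin (2 * l)) - l, by omega⟩, by
    have := R.2
    simp only [Fin.le_def, finProdFinEquiv_apply_val] at this ⊢
    omega⟩
  left_inv r := by
    ext
    simp only [finProdFinEquiv_apply_val]
    omega
  right_inv R := by
    have := R.2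
    ext
    simp only [Fin.le_def, finProdFinEquiv_apply_val] at this ⊢
    omega

def pairEquiv (l : ℕ) : (Fin (2 * l) → Bool) ≃ (Fin l → Bool × Bool) :=
  (finProdFinEquiv.arrowCongr (Equiv.refl Bool)).symm.trans <|
    ((Equiv.prodComm _ _).arrowCongr (Equiv.refl Bool)).trans <|
      (Equiv.curry _ _ _).trans <| Equiv.piCongrRight fun _ => finTwoArrowEquiv Bool

lemma pairEquiv_apply (e : Fin (2 * l) → Bool) (j : Fin l) :
    pairEquiv l e j = (e (finProdFinEquiv (0, j)), e (finProdFinEquiv (1, j))) :=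
  rfl

lemma coe_lowerRows_apply (i : Fin l) (r : {r : Fin l // i ≤ r}) :
    (lowerRows i r : Fin (2 * l)) = finProdFinEquiv (1, (r : Fin l)) :=
  rfl

lemma pairWeight_pairEquiv (e : Fin (2 * l) → Bool) : pairWeight (pairEquiv l e) = weight e := by
  rw [weight_eq_sum_toNat, ← finProdFinEquiv.sum_comp, Fintype.sum_prod_type_right]
  simp only [pairWeight, pairEquiv_apply, Fin.sum_univ_two]

lemma kills_kron_Ttwo_iff (T : Matrix (Fin l) (Fin l) (ZMod 2)) (i : Fin l)
    (e : Fin (2 * l) → Bool) :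
    Kills (kron Ttwo T) (finProdFinEquiv (1, i)) e ↔ Kills T i (andPattern (pairEquiv l e)) := by
  have hcol (a : Fin 2) (j : Fin l) :
      (fun r : {r // i ≤ r} => kron Ttwo T (lowerRows i r).1 (finProdFinEquiv (a, j))) =
        fun r => T r.1 j :=
    funext fun r => by rw [coe_lowerRows_apply, kron_finProdFinEquiv_apply, Ttwo_one_apply, one_mul]
  refine kills_iff_of_equiv_rows (lowerRows i) (fun r => ?_) ?_
  · simp [coe_lowerRows_apply]
  · ext v
    constructor
    · rintro ⟨j, hj, rfl⟩
      rw [andPattern, pairEquiv_apply, Bool.and_eq_false_iff] at hj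
      rcases hj with hj | hj
      · exact ⟨_, hj, (hcol 0 j).symm⟩
      · exact ⟨_, hj, (hcol 1 j).symm⟩
    · rintro ⟨J, hJ, rfl⟩
      obtain ⟨⟨a, j⟩, rfl⟩ := finProdFinEquiv.surjective J
      refine ⟨j, ?_, hcol a j⟩
      rw [andPattern, pairEquiv_apply, Bool.and_eq_false_iff]
      fin_cases a
      exacts [Or.inl hJ, Or.inr hJ]

lemma numKilling_eq_card (T : Matrix (Fin l) (Fin l) (ZMod 2)) (i : Fin l) (w : ℕ)
    [DecidablePred (Kills T i)] : numKilling T i w = #{e | weight e = w ∧ Kills T i e} := by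
  rw [numKilling, Nat.card_eq_fintype_card, Fintype.card_subtype]
  rfl

end LowerHalf

theorem numKilling_kron_lowerHalf {l : ℕ} (T : Matrix (Fin l) (Fin l) (ZMod 2))
    (i : Fin l) (w : ℕ) :
    numKilling (kron Ttwo T) ⟨l + (i : ℕ), by have := i.isLt; omega⟩ w =
      ∑ w₀ ∈ Finset.range (w / 2 + 1),
        Nat.choose (l - w₀) (w - 2 * w₀) * 2 ^ (w - 2 * w₀) * numKilling T i w₀ := by
  classical
  have hrow : (⟨l + (i : ℕ), by omega⟩ : Fin (2 * l)) = finProdFinEquiv (1, i) :=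
    Fin.ext (by simp only [finProdFinEquiv_apply_val]; omega)
  rw [hrow, numKilling_eq_card, card_equiv (pairEquiv l) fun e => ?_,
    card_pairWeight_eq_and_andPattern (Kills T i) w, Fintype.card_fin]
  · simp_rw [numKilling_eq_card]
  · simp only [mem_filter, mem_univ, true_and, pairWeight_pairEquiv, kills_kron_Ttwo_iff]
end

section
/- Let T₁ be a nonsingular l₁×l₁ matrix over GF(2) and T₂ a nonsingular l₂×l₂ matrix over GF(2), and let T_L = T₁⊗T₂ be their Kronecker product, of size L = l₁l₂. Then for all 0 ≤ j ≤ l₁−1 and 0 ≤ k ≤ l₂−1, the erasure polynomial of bit channel i = j·l₂ + k of T_L is the composition of the erasure polynomials of the component kernels: p_i^{T_L}(z) = p_k^{T₂}( p_j^{T₁}(z) ) as an identity of polynomials in ℤ[z]. -/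
open Matrix

-- index arithmetic helpers
lemma lex_lt_aux {l₂ : ℕ} (a c : ℕ) (b d : Fin l₂) (h : a < c) :
    a * l₂ + (b : ℕ) < c * l₂ + (d : ℕ) := by
  calc a * l₂ + (b : ℕ) < a * l₂ + l₂ := Nat.add_lt_add_left b.isLt _
    _ = (a + 1) * l₂ := by ring
    _ ≤ c * l₂ := Nat.mul_le_mul_right _ h
    _ ≤ c * l₂ + (d : ℕ) := Nat.le_add_right _ _

lemma lex_le_iff {l₂ : ℕ} (a c : ℕ) (b d : Fin l₂) :
    a * l₂ + (b : ℕ) ≤ c * l₂ + (d : ℕ) ↔ a < c ∨ (a = c ∧ (b : ℕ) ≤ (d : ℕ)) := by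
  rcases lt_trichotomy a c with h | h | h
  · simp [h, le_of_lt (lex_lt_aux a c b d h)]
  · subst h
    constructor
    · intro h'; exact Or.inr ⟨rfl, by omega⟩
    · rintro (h' | ⟨-, h'⟩) <;> omega
  · have := lex_lt_aux c a d b h
    constructor
    · intro h'; omega
    · rintro (h' | ⟨rfl, _⟩) <;> omega

lemma lex_eq_iff {l₂ : ℕ} (a c : ℕ) (b d : Fin l₂) :
    a * l₂ + (b : ℕ) = c * l₂ + (d : ℕ) ↔ a = c ∧ b = d := by
  rcases lt_trichotomy a c with h | h | h
  · have := lex_lt_aux a c b d h; constructor <;> intro h' <;> [omega; omega]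
  · subst h; rw [Fin.ext_iff]; omega
  · have := lex_lt_aux c a d b h; constructor <;> intro h' <;> [omega; omega]



private lemma sum_subtype_ext {l : ℕ} (e : Fin l → Bool) (φ F : Fin l → ZMod 2)
    (h : ∀ a, e a = true → φ a = 0) :
    ∑ j : {j : Fin l // e j = false}, φ j.val * F j.val = ∑ j : Fin l, φ j * F j := by
  rw [← Finset.sum_subtype (Finset.filter (fun j => e j = false) Finset.univ)
      (by intro x; simp) (fun j => φ j * F j)]
  rw [Finset.sum_filter]
  refine Finset.sum_congr rfl fun j _ => ?_
  by_cases hj : e j = false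
  · simp [hj]
  · have : φ j = 0 := h j (by revert hj; cases e j <;> simp)
    simp [this, hj]

lemma not_kills_iff {l : ℕ} (T : Matrix (Fin l) (Fin l) (ZMod 2)) (i : Fin l)
    (e : Fin l → Bool) :
    ¬ Kills T i e ↔ ∃ x : Fin l → ZMod 2, (∀ a, e a = true → x a = 0) ∧
      ∀ r : Fin l, i ≤ r → (T *ᵥ x) r = (if r = i then 1 else 0) := by
  rw [Kills, not_not]
  have hset : {w : {r : Fin l // i ≤ r} → ZMod 2 |
      ∃ j : Fin l, e j = false ∧ w = fun r => T r.val j} =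
      Set.range (fun j : {j : Fin l // e j = false} => fun r : {r : Fin l // i ≤ r} => T r.val j.val) := by
    ext w
    constructor
    · rintro ⟨j, hj, rfl⟩; exact ⟨⟨j, hj⟩, rfl⟩
    · rintro ⟨⟨j, hj⟩, rfl⟩; exact ⟨j, hj, rfl⟩
  rw [hset, Submodule.mem_span_range_iff_exists_fun]
  have hmv : ∀ (x : Fin l → ZMod 2) (r : Fin l), (T *ᵥ x) r = ∑ j : Fin l, x j * T r j := by
    intro x r; simp [Matrix.mulVec, dotProduct, mul_comm]
  constructor
  · rintro ⟨c, hc⟩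
    set x : Fin l → ZMod 2 := fun a => if h : e a = false then c ⟨a, h⟩ else 0 with hxdef
    have hx0 : ∀ a, e a = true → x a = 0 := by intro a ha; simp [hxdef, ha]
    refine ⟨x, hx0, ?_⟩
    intro r hr
    have := congrFun hc ⟨r, hr⟩
    simp only [Finset.sum_apply, Pi.smul_apply, smul_eq_mul] at this
    rw [hmv]
    rw [← sum_subtype_ext e x (fun j => T r j) hx0]
    rw [← this]
    refine Finset.sum_congr rfl fun a _ => ?_
    simp [hxdef, a.2]
  · rintro ⟨x, hx0, hx⟩
    refine ⟨fun j => x j.val, ?_⟩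
    funext r
    have := hx r.1 r.2
    rw [hmv] at this
    simp only [Finset.sum_apply, Pi.smul_apply, smul_eq_mul]
    rw [sum_subtype_ext e x (fun j => T r.1 j) hx0]
    exact this

lemma kron_apply {l₁ l₂ : ℕ} (T₁ : Matrix (Fin l₁) (Fin l₁) (ZMod 2))
    (T₂ : Matrix (Fin l₂) (Fin l₂) (ZMod 2)) (a c : Fin l₁) (b d : Fin l₂) :
    (kron T₁ T₂) (finProdFinEquiv (a, b)) (finProdFinEquiv (c, d)) = T₁ a c * T₂ b d := by
  simp [kron, Matrix.reindex_apply, Matrix.kroneckerMap_apply, Equiv.symm_apply_apply]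

lemma mulVec_expand {l : ℕ} (T : Matrix (Fin l) (Fin l) (ZMod 2)) (x : Fin l → ZMod 2)
    (r : Fin l) : (T *ᵥ x) r = ∑ c : Fin l, T r c * x c := by
  simp [Matrix.mulVec, dotProduct]

lemma kron_mulVec {l₁ l₂ : ℕ} (T₁ : Matrix (Fin l₁) (Fin l₁) (ZMod 2))
    (T₂ : Matrix (Fin l₂) (Fin l₂) (ZMod 2)) (X : Fin (l₁ * l₂) → ZMod 2)
    (a : Fin l₁) (b : Fin l₂) :
    (kron T₁ T₂ *ᵥ X) (finProdFinEquiv (a, b)) =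
      ∑ d : Fin l₂, T₂ b d * ((T₁ *ᵥ fun c => X (finProdFinEquiv (c, d))) a) := by
  rw [mulVec_expand]
  rw [← Equiv.sum_comp (finProdFinEquiv : Fin l₁ × Fin l₂ ≃ Fin (l₁ * l₂))
    (fun p => (kron T₁ T₂) (finProdFinEquiv (a, b)) p * X p)]
  rw [Fintype.sum_prod_type]
  rw [Finset.sum_comm]
  refine Finset.sum_congr rfl fun d _ => ?_
  rw [mulVec_expand, Finset.mul_sum]
  refine Finset.sum_congr rfl fun c _ => ?_
  rw [kron_apply]
  ring

lemma mulVec_smul' {l : ℕ} (T : Matrix (Fin l) (Fin l) (ZMod 2)) (cst : ZMod 2)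
    (v : Fin l → ZMod 2) (a : Fin l) :
    (T *ᵥ fun c => cst * v c) a = cst * (T *ᵥ v) a := by
  rw [mulVec_expand, mulVec_expand, Finset.mul_sum]
  exact Finset.sum_congr rfl fun c _ => by ring

open scoped Classical in
lemma kills_kron {l₁ l₂ : ℕ} (T₁ : Matrix (Fin l₁) (Fin l₁) (ZMod 2))
    (T₂ : Matrix (Fin l₂) (Fin l₂) (ZMod 2)) (h₂ : IsUnit T₂)
    (j : Fin l₁) (k : Fin l₂) (i : Fin (l₁ * l₂)) (hi : (i : ℕ) = (j : ℕ) * l₂ + (k : ℕ))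
    (e : Fin (l₁ * l₂) → Bool) :
    Kills (kron T₁ T₂) i e ↔
      Kills T₂ k (fun d => decide (Kills T₁ j (fun c => e (finProdFinEquiv (c, d))))) := by
  rw [← not_iff_not, not_kills_iff, not_kills_iff]
  set f : Fin l₂ → Bool := fun d => decide (Kills T₁ j (fun c => e (finProdFinEquiv (c, d)))) with hf
  have hπval : ∀ (a : Fin l₁) (b : Fin l₂),
      ((finProdFinEquiv (a, b) : Fin (l₁ * l₂)) : ℕ) = (a : ℕ) * l₂ + (b : ℕ) := by
    intro a b; simp [finProdFinEquiv]; ring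
  have hle : ∀ (a : Fin l₁) (b : Fin l₂), i ≤ finProdFinEquiv (a, b) ↔
      ((j : ℕ) < (a : ℕ) ∨ ((j : ℕ) = (a : ℕ) ∧ (k : ℕ) ≤ (b : ℕ))) := by
    intro a b
    rw [Fin.le_def, hi, hπval, lex_le_iff]
  have heq : ∀ (a : Fin l₁) (b : Fin l₂), finProdFinEquiv (a, b) = i ↔ (a = j ∧ b = k) := by
    intro a b
    rw [Fin.ext_iff, hπval, hi]
    rw [lex_eq_iff]
    constructor
    · rintro ⟨h1, h2⟩; exact ⟨Fin.ext h1, h2⟩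
    · rintro ⟨rfl, rfl⟩; exact ⟨rfl, rfl⟩
  have hT2 : ∀ u : Fin l₂ → ZMod 2, T₂ *ᵥ u = 0 → u = 0 := by
    intro u hu
    have h1 : T₂⁻¹ *ᵥ (T₂ *ᵥ u) = u := by
      rw [Matrix.mulVec_mulVec, Matrix.nonsing_inv_mul _ ((Matrix.isUnit_iff_isUnit_det T₂).mp h₂),
        Matrix.one_mulVec]
    rw [hu, Matrix.mulVec_zero] at h1
    exact h1.symm
  constructor
  · -- direction B
    rintro ⟨X, hX0, hX⟩
    set xv : Fin l₂ → ZMod 2 := fun d => (T₁ *ᵥ fun c => X (finProdFinEquiv (c, d))) j with hxv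
    have hzero : ∀ (a : Fin l₁), (j : ℕ) < (a : ℕ) →
        ∀ d : Fin l₂, (T₁ *ᵥ fun c => X (finProdFinEquiv (c, d))) a = 0 := by
      intro a ha
      have hu : T₂ *ᵥ (fun d' => (T₁ *ᵥ fun c => X (finProdFinEquiv (c, d'))) a) = 0 := by
        funext b
        have h1 := hX (finProdFinEquiv (a, b)) ((hle a b).mpr (Or.inl ha))
        rw [kron_mulVec] at h1
        have hne : finProdFinEquiv (a, b) ≠ i := by
          intro h'
          rcases (heq a b).mp h' with ⟨rfl, -⟩
          exact lt_irrefl _ ha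
        rw [if_neg hne] at h1
        rw [mulVec_expand]
        exact h1
      intro d
      exact congrFun (hT2 _ hu) d
    refine ⟨xv, ?_, ?_⟩
    · intro d hd
      by_contra hne
      have hone : xv d = 1 := by
        have : ∀ x : ZMod 2, x = 0 ∨ x = 1 := by decide
        rcases this (xv d) with h | h
        · exact absurd h hne
        · exact h
      have hkills : Kills T₁ j (fun c => e (finProdFinEquiv (c, d))) := of_decide_eq_true hd
      refine absurd hkills ?_
      rw [not_kills_iff]
      refine ⟨fun c => X (finProdFinEquiv (c, d)), ?_, ?_⟩
      · intro c hc; exact hX0 _ hc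
      · intro a hja
        by_cases h : a = j
        · subst h; rw [if_pos rfl]; exact hone
        · rw [if_neg h]
          exact hzero a (by rw [Fin.le_def] at hja; omega) d
    · intro b hb
      have h1 := hX (finProdFinEquiv (j, b)) ((hle j b).mpr (Or.inr ⟨rfl, hb⟩))
      rw [kron_mulVec] at h1
      rw [mulVec_expand, h1]
      by_cases hbk : b = k
      · subst hbk; rw [if_pos ((heq _ _).mpr ⟨rfl, rfl⟩), if_pos rfl]
      · rw [if_neg (fun h => hbk ((heq _ _).mp h).2), if_neg hbk]
  · -- direction A
    rintro ⟨xv, hxv0, hxv⟩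
    have hw : ∀ d : Fin l₂, f d = false → ∃ w : Fin l₁ → ZMod 2,
        (∀ c, e (finProdFinEquiv (c, d)) = true → w c = 0) ∧
        ∀ a : Fin l₁, j ≤ a → (T₁ *ᵥ w) a = if a = j then 1 else 0 := by
      intro d hd
      have : ¬ Kills T₁ j (fun c => e (finProdFinEquiv (c, d))) := of_decide_eq_false hd
      exact (not_kills_iff _ _ _).mp this
    choose w hw0 hwv using hw
    set W : Fin l₂ → Fin l₁ → ZMod 2 :=
      fun d c => if h : f d = false then xv d * w d h c else 0 with hW
    refine ⟨fun p => W (finProdFinEquiv.symm p).2 (finProdFinEquiv.symm p).1, ?_, ?_⟩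
    · intro p hp
      rcases finProdFinEquiv.surjective p with ⟨⟨c, d⟩, rfl⟩
      simp only [Equiv.symm_apply_apply]
      by_cases h : f d = false
      · rw [hW]; simp only [dif_pos h]
        rw [hw0 d h c hp, mul_zero]
      · rw [hW]; simp only [dif_neg h]
    · intro r hr
      rcases finProdFinEquiv.surjective r with ⟨⟨a, b⟩, rfl⟩
      rw [kron_mulVec]
      have hWsimp : ∀ d : Fin l₂,
          (fun c => W (finProdFinEquiv.symm (finProdFinEquiv (c, d))).2
            (finProdFinEquiv.symm (finProdFinEquiv (c, d))).1) = fun c => W d c := by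
        intro d; funext c; simp only [Equiv.symm_apply_apply]
      simp only [hWsimp]
      rcases (hle a b).mp hr with hja | ⟨hja, hkb⟩
      · -- a > j case: everything vanishes
        have hterm : ∀ d : Fin l₂, (T₁ *ᵥ fun c => W d c) a = 0 := by
          intro d
          by_cases h : f d = false
          · rw [hW]; simp only [dif_pos h]
            rw [mulVec_smul', hwv d h a (by rw [Fin.le_def]; omega),
              if_neg (by intro h'; subst h'; omega), mul_zero]
          · rw [hW]; simp only [dif_neg h]
            rw [show (T₁ *ᵥ fun _ => (0 : ZMod 2)) = 0 by
              funext a'; rw [mulVec_expand]; simp]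
            rfl
        rw [Finset.sum_congr rfl fun d _ => by rw [hterm d, mul_zero]]
        rw [Finset.sum_const_zero]
        rw [if_neg (fun h' => by rcases (heq a b).mp h' with ⟨rfl, -⟩; exact lt_irrefl _ hja)]
      · -- a = j case
        have haj : a = j := Fin.ext hja.symm
        subst haj
        have hterm : ∀ d : Fin l₂, T₂ b d * ((T₁ *ᵥ fun c => W d c) a) = T₂ b d * xv d := by
          intro d
          by_cases h : f d = false
          · rw [hW]; simp only [dif_pos h]
            rw [mulVec_smul', hwv d h a (le_refl a), if_pos rfl, mul_one]
          · rw [hW]; simp only [dif_neg h]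
            rw [show (T₁ *ᵥ fun _ => (0 : ZMod 2)) = 0 by
              funext a'; rw [mulVec_expand]; simp]
            have hft : f d = true := by
              cases hfd : f d
              · exact absurd hfd h
              · rfl
            rw [hxv0 d hft]
            simp
        rw [Finset.sum_congr rfl fun d _ => hterm d]
        have h2 := hxv b hkb
        rw [mulVec_expand] at h2
        rw [h2]
        by_cases hbk : b = k
        · subst hbk; rw [if_pos rfl, if_pos ((heq _ _).mpr ⟨rfl, rfl⟩)]
        · rw [if_neg hbk, if_neg (fun h => hbk ((heq _ _).mp h).2)]

open Polynomial in
noncomputable def mono {l : ℕ} (e : Fin l → Bool) : Polynomial ℤ :=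
  ∏ a : Fin l, (if e a then X else 1 - X)

open Polynomial in
lemma mono_eq {l : ℕ} (e : Fin l → Bool) :
    mono e = X ^ (Finset.univ.filter fun j => e j = true).card *
      (1 - X) ^ (l - (Finset.univ.filter fun j => e j = true).card) := by
  classical
  rw [mono, Finset.prod_ite (fun _ => (X : Polynomial ℤ)) (fun _ => 1 - X),
    Finset.prod_const, Finset.prod_const]
  congr 1
  rw [Finset.filter_not, Finset.card_sdiff_of_subset (Finset.filter_subset _ _),
    Finset.card_univ, Fintype.card_fin]

open Polynomial in
lemma sum_mono (l : ℕ) : ∑ e : Fin l → Bool, mono (l := l) e = 1 := by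
  classical
  have h := Finset.prod_univ_sum (fun _ : Fin l => (Finset.univ : Finset Bool))
    (fun _ b => if b then (X : Polynomial ℤ) else 1 - X)
  rw [Fintype.piFinset_univ] at h
  have h2 : ∑ e : Fin l → Bool, mono (l := l) e
      = ∏ _a : Fin l, ∑ b : Bool, (if b then (X : Polynomial ℤ) else 1 - X) := by
    rw [h]; rfl
  rw [h2]
  have : ∑ b : Bool, (if b then (X : Polynomial ℤ) else 1 - X) = 1 := by
    simp
  rw [this, Finset.prod_const_one]

open Polynomial Classical in
lemma erasurePoly_eq {l : ℕ} (T : Matrix (Fin l) (Fin l) (ZMod 2)) (i : Fin l) :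
    erasurePoly T i = ∑ e : Fin l → Bool, if Kills T i e then mono e else 0 := by
  rw [erasurePoly]
  have hmaps : ∀ e : Fin l → Bool, e ∈ Finset.univ →
      (Finset.univ.filter fun j => e j = true).card ∈ Finset.range (l + 1) := by
    intro e _
    rw [Finset.mem_range]
    have := Finset.card_filter_le (Finset.univ : Finset (Fin l)) (fun j => e j = true)
    rw [Finset.card_univ, Fintype.card_fin] at this
    omega
  have hfib := Finset.sum_fiberwise_of_maps_to hmaps
    (fun e : Fin l → Bool => if Kills T i e then mono e else 0)
  rw [← hfib]
  refine Finset.sum_congr rfl fun w hw => ?_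
  have hstep : ∀ e ∈ Finset.univ.filter
      (fun e : Fin l → Bool => (Finset.univ.filter fun j => e j = true).card = w),
      (if Kills T i e then mono e else 0)
        = (if Kills T i e then X ^ w * (1 - X) ^ (l - w) else 0) := by
    intro e he
    have hwt := (Finset.mem_filter.mp he).2
    rw [mono_eq, hwt]
  rw [Finset.sum_congr rfl hstep]
  rw [← Finset.sum_filter, Finset.filter_filter, Finset.sum_const]
  have hcard : numKilling T i w = (Finset.filter
      (fun e : Fin l → Bool => (Finset.univ.filter fun j => e j = true).card = w ∧ Kills T i e)
      Finset.univ).card := by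
    rw [numKilling, Nat.card_eq_fintype_card, Fintype.card_subtype]
  rw [hcard, nsmul_eq_mul, mul_assoc]


def blockEquiv (l₁ l₂ : ℕ) : (Fin l₂ → Fin l₁ → Bool) ≃ (Fin (l₁ * l₂) → Bool) where
  toFun E := fun p => E (finProdFinEquiv.symm p).2 (finProdFinEquiv.symm p).1
  invFun e := fun d c => e (finProdFinEquiv (c, d))
  left_inv E := by funext d c; simp
  right_inv e := by
    funext p
    rcases finProdFinEquiv.surjective p with ⟨⟨c, d⟩, rfl⟩
    simp

lemma blockEquiv_apply {l₁ l₂ : ℕ} (E : Fin l₂ → Fin l₁ → Bool) (c : Fin l₁) (d : Fin l₂) :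
    blockEquiv l₁ l₂ E (finProdFinEquiv (c, d)) = E d c := by
  show E (finProdFinEquiv.symm (finProdFinEquiv (c, d))).2
    (finProdFinEquiv.symm (finProdFinEquiv (c, d))).1 = E d c
  rw [Equiv.symm_apply_apply]


open Polynomial Classical

theorem erasurePoly_kron {l₁ l₂ : ℕ}
    (T₁ : Matrix (Fin l₁) (Fin l₁) (ZMod 2)) (T₂ : Matrix (Fin l₂) (Fin l₂) (ZMod 2))
    (h₁ : IsUnit T₁) (h₂ : IsUnit T₂) (j : Fin l₁) (k : Fin l₂) :
    erasurePoly (kron T₁ T₂)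
        ⟨(j : ℕ) * l₂ + (k : ℕ), by
          calc (j : ℕ) * l₂ + (k : ℕ) < (j : ℕ) * l₂ + l₂ := Nat.add_lt_add_left k.isLt _
            _ = ((j : ℕ) + 1) * l₂ := by ring
            _ ≤ l₁ * l₂ := Nat.mul_le_mul_right _ j.isLt⟩ =
      (erasurePoly T₂ k).comp (erasurePoly T₁ j) := by
  set i : Fin (l₁ * l₂) := ⟨(j : ℕ) * l₂ + (k : ℕ), by
          calc (j : ℕ) * l₂ + (k : ℕ) < (j : ℕ) * l₂ + l₂ := Nat.add_lt_add_left k.isLt _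
            _ = ((j : ℕ) + 1) * l₂ := by ring
            _ ≤ l₁ * l₂ := Nat.mul_le_mul_right _ j.isLt⟩ with hidef
  rw [erasurePoly_eq T₂ k, erasurePoly_eq (kron T₁ T₂)]
  -- compute composition on the right
  have hrhs : (∑ f : Fin l₂ → Bool, if Kills T₂ k f then mono f else 0).comp (erasurePoly T₁ j)
      = ∑ f : Fin l₂ → Bool, if Kills T₂ k f then
          (∏ d : Fin l₂, if f d then erasurePoly T₁ j else 1 - erasurePoly T₁ j) else 0 := by
    rw [show (∑ f : Fin l₂ → Bool, if Kills T₂ k f then mono f else 0).comp (erasurePoly T₁ j)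
        = ∑ f : Fin l₂ → Bool, ((if Kills T₂ k f then mono f else 0).comp (erasurePoly T₁ j)) from
      map_sum (Polynomial.compRingHom (erasurePoly T₁ j)) _ _]
    refine Finset.sum_congr rfl fun f _ => ?_
    by_cases hk : Kills T₂ k f
    · rw [if_pos hk, if_pos hk, mono]
      rw [show (∏ d : Fin l₂, if f d then (X : Polynomial ℤ) else 1 - X).comp (erasurePoly T₁ j)
          = ∏ d : Fin l₂, ((if f d then (X : Polynomial ℤ) else 1 - X).comp (erasurePoly T₁ j)) from
        map_prod (Polynomial.compRingHom (erasurePoly T₁ j)) _ _]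
      refine Finset.prod_congr rfl fun d _ => ?_
      by_cases hd : f d = true
      · rw [if_pos hd, if_pos hd, X_comp]
      · rw [if_neg hd, if_neg hd, sub_comp, one_comp, X_comp]
    · rw [if_neg hk, if_neg hk, zero_comp]
  rw [hrhs]
  -- reindex the left-hand sum by blocks
  rw [← Equiv.sum_comp (blockEquiv l₁ l₂)
    (fun e => if Kills (kron T₁ T₂) i e then mono e else 0)]
  have hK : ∀ E : Fin l₂ → Fin l₁ → Bool,
      Kills (kron T₁ T₂) i (blockEquiv l₁ l₂ E) ↔
        Kills T₂ k (fun d => decide (Kills T₁ j (E d))) := by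
    intro E
    rw [kills_kron T₁ T₂ h₂ j k i rfl]
    rw [show (fun d => decide (Kills T₁ j fun c => blockEquiv l₁ l₂ E (finProdFinEquiv (c, d))))
        = fun d => decide (Kills T₁ j (E d)) by
      funext d
      congr 1
      rw [show (fun c => blockEquiv l₁ l₂ E (finProdFinEquiv (c, d))) = E d by
        funext c; rw [blockEquiv_apply]]]
  have hmono : ∀ E : Fin l₂ → Fin l₁ → Bool,
      mono (blockEquiv l₁ l₂ E) = ∏ d : Fin l₂, mono (E d) := by
    intro E
    rw [mono, ← Equiv.prod_comp (finProdFinEquiv : Fin l₁ × Fin l₂ ≃ Fin (l₁ * l₂))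
      (fun p => if (blockEquiv l₁ l₂ E) p then (X : Polynomial ℤ) else 1 - X)]
    rw [Fintype.prod_prod_type, Finset.prod_comm]
    refine Finset.prod_congr rfl fun d _ => ?_
    rw [mono]
    refine Finset.prod_congr rfl fun c _ => ?_
    rw [blockEquiv_apply]
  have hint : ∀ E : Fin l₂ → Fin l₁ → Bool,
      (if Kills (kron T₁ T₂) i (blockEquiv l₁ l₂ E) then mono (blockEquiv l₁ l₂ E) else 0)
      = (if Kills T₂ k (fun d => decide (Kills T₁ j (E d))) then ∏ d : Fin l₂, mono (E d)
          else 0) := by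
    intro E
    rw [hmono E]
    by_cases h : Kills T₂ k (fun d => decide (Kills T₁ j (E d)))
    · rw [if_pos ((hK E).mpr h), if_pos h]
    · rw [if_neg (fun h' => h ((hK E).mp h')), if_neg h]
  rw [Finset.sum_congr rfl fun E _ => hint E]
  have hfib := Finset.sum_fiberwise_of_maps_to
    (g := fun E : Fin l₂ → Fin l₁ → Bool => fun d => decide (Kills T₁ j (E d)))
    (s := (Finset.univ : Finset (Fin l₂ → Fin l₁ → Bool)))
    (t := (Finset.univ : Finset (Fin l₂ → Bool)))
    (fun _ _ => Finset.mem_univ _)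
    (fun E => if Kills T₂ k (fun d => decide (Kills T₁ j (E d)))
      then ∏ d : Fin l₂, mono (E d) else 0)
  rw [← hfib]
  refine Finset.sum_congr rfl fun f _ => ?_
  have hcongr : ∀ E ∈ Finset.univ.filter
      (fun E : Fin l₂ → Fin l₁ → Bool => (fun d => decide (Kills T₁ j (E d))) = f),
      (if Kills T₂ k (fun d => decide (Kills T₁ j (E d))) then ∏ d : Fin l₂, mono (E d) else 0)
      = (if Kills T₂ k f then ∏ d : Fin l₂, mono (E d) else 0) := by
    intro E hE
    rw [(Finset.mem_filter.mp hE).2]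
  rw [Finset.sum_congr rfl hcongr]
  by_cases hk : Kills T₂ k f
  · simp only [if_pos hk]
    rw [Finset.sum_filter]
    have hsplit : ∀ E : Fin l₂ → Fin l₁ → Bool,
        (if (fun d => decide (Kills T₁ j (E d))) = f then ∏ d : Fin l₂, mono (E d) else 0)
        = ∏ d : Fin l₂, (if decide (Kills T₁ j (E d)) = f d then mono (E d) else 0) := by
      intro E
      by_cases h : (fun d => decide (Kills T₁ j (E d))) = f
      · rw [if_pos h]
        exact (Finset.prod_congr rfl fun d _ => if_pos (congrFun h d)).symm
      · rw [if_neg h]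
        obtain ⟨d, hd⟩ := Function.ne_iff.mp h
        exact (Finset.prod_eq_zero
          (f := fun d => if decide (Kills T₁ j (E d)) = f d then mono (E d) else 0)
          (Finset.mem_univ d) (if_neg hd)).symm
    rw [Finset.sum_congr rfl fun E _ => hsplit E]
    have hswap := Finset.prod_univ_sum (fun _ : Fin l₂ => (Finset.univ : Finset (Fin l₁ → Bool)))
      (fun d g => if decide (Kills T₁ j g) = f d then mono g else 0)
    rw [Fintype.piFinset_univ] at hswap
    rw [← hswap]
    refine Finset.prod_congr rfl fun d _ => ?_
    by_cases hd : f d = true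
    · rw [if_pos hd, erasurePoly_eq T₁ j]
      refine Finset.sum_congr rfl fun g _ => ?_
      rw [hd]
      by_cases hkg : Kills T₁ j g
      · rw [if_pos (by simp [hkg]), if_pos hkg]
      · rw [if_neg (by simp [hkg]), if_neg hkg]
    · rw [if_neg hd]
      have hfd : f d = false := by revert hd; cases f d <;> simp
      have hsum : (∑ g : Fin l₁ → Bool, if Kills T₁ j g then mono g else 0)
          + (∑ g : Fin l₁ → Bool, if decide (Kills T₁ j g) = f d then mono g else 0) = 1 := by
        rw [← Finset.sum_add_distrib, ← sum_mono l₁]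
        refine Finset.sum_congr rfl fun g _ => ?_
        by_cases hkg : Kills T₁ j g
        · rw [if_pos hkg, if_neg (by simp [hkg, hfd]), add_zero]
        · rw [if_neg hkg, if_pos (by simp [hkg, hfd]), zero_add]
      have hfin := eq_sub_of_add_eq' hsum
      rw [hfin, erasurePoly_eq T₁ j]
  · simp only [if_neg hk]
    exact Finset.sum_const_zero
end
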